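/- arXiv:2008.07681 — 3 statements merged into one kernel-verified Lean document; each statement's English description precedes it below -/
import Mathlib

section
/- Let w : ℕ → (0,∞) be nondecreasing, 1 < p < ∞, a := 1/(p−1), and for s ∈ [0,1] set p_s := p/(1 + s(p−1)). Then for all 0 ≤ r < s ≤ 1 and all x ∈ ℓ^{p_s}(w): ‖x‖_{ℓ^{p_r}(w)} ≤ ‖x‖_{ℓ^{p_s}(w)}^{(a+r)/(a+s)} · ‖x‖_{ℓ^∞(w)}^{(s−r)/(a+s)}. -/
/-!
Each term of an `ℓ^q(w)` sum is `w n * ((w n)⁻¹ * |x n|) ^ q`, so with `M := ‖x‖_{ℓ^∞(w)}` the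
`ℓ^{q₂}(w)` sum is bounded termwise by the `ℓ^{q₁}(w)` sum times `M ^ (q₂ - q₁)` whenever
`q₁ ≤ q₂`; taking `q₂`-th roots gives `‖x‖_{q₂} ≤ ‖x‖_{q₁} ^ (q₁/q₂) * M ^ (1 - q₁/q₂)`.
For `q₁ = p_s`, `q₂ = p_r` the ratio `q₁/q₂` is `(a+r)/(a+s)`. Since `w ≥ w 0 > 0`, summability
bounds `w⁻¹ |x|` uniformly, so `M` is a genuine supremum rather than the junk value of `⨆`.
-/

open Set

noncomputable def weightedLpNorm {ι : Type*} (w x : ι → ℝ) (q : ℝ) : ℝ :=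
  (∑' i, w i ^ (1 - q) * |x i| ^ q) ^ (1 / q)

noncomputable def weightedSupNorm {ι : Type*} (w x : ι → ℝ) : ℝ :=
  ⨆ i, (w i)⁻¹ * |x i|

section Term

variable {v b : ℝ}

lemma rpow_one_sub_mul_rpow_eq (hv : 0 < v) (hb : 0 ≤ b) (q : ℝ) :
    v ^ (1 - q) * b ^ q = v * (v⁻¹ * b) ^ q := by
  rw [Real.mul_rpow (inv_nonneg.mpr hv.le) hb, Real.inv_rpow hv.le, ← Real.rpow_neg hv.le,
    ← mul_assoc, sub_eq_add_neg, Real.rpow_add hv, Real.rpow_one]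

lemma rpow_one_sub_mul_rpow_le {q₁ q₂ M : ℝ} (hv : 0 < v) (hb : 0 ≤ b) (hq₁ : 0 < q₁)
    (hq : q₁ ≤ q₂) (hM : v⁻¹ * b ≤ M) :
    v ^ (1 - q₂) * b ^ q₂ ≤ v ^ (1 - q₁) * b ^ q₁ * M ^ (q₂ - q₁) := by
  have hvb : 0 ≤ v⁻¹ * b := mul_nonneg (inv_nonneg.mpr hv.le) hb
  calc v ^ (1 - q₂) * b ^ q₂ = v * (v⁻¹ * b) ^ q₁ * (v⁻¹ * b) ^ (q₂ - q₁) := by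
        rw [rpow_one_sub_mul_rpow_eq hv hb, mul_assoc,
          ← Real.rpow_add' hvb (by linarith), add_sub_cancel]
    _ ≤ v * (v⁻¹ * b) ^ q₁ * M ^ (q₂ - q₁) := by gcongr
    _ = v ^ (1 - q₁) * b ^ q₁ * M ^ (q₂ - q₁) := by rw [rpow_one_sub_mul_rpow_eq hv hb]

end Term

section Weighted

variable {ι : Type*} {w x : ι → ℝ}

lemma bddAbove_inv_mul_abs_of_summable {c q : ℝ} (hc : 0 < c) (hw : ∀ i, c ≤ w i)
    (hq : 0 < q) (hx : Summable fun i => w i ^ (1 - q) * |x i| ^ q) :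
    BddAbove (range fun i => (w i)⁻¹ * |x i|) := by
  obtain ⟨C, hC⟩ := hx.tendsto_cofinite_zero.bddAbove_range_of_cofinite
  refine ⟨(c⁻¹ * C) ^ q⁻¹, forall_mem_range.2 fun i => ?_⟩
  have hwi : 0 < w i := hc.trans_le (hw i)
  have hterm : w i ^ (1 - q) * |x i| ^ q ≤ C := hC (mem_range_self i)
  have hpow : ((w i)⁻¹ * |x i|) ^ q ≤ c⁻¹ * C := by
    rw [rpow_one_sub_mul_rpow_eq hwi (abs_nonneg _)] at hterm
    rw [le_inv_mul_iff₀ hc]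
    calc c * ((w i)⁻¹ * |x i|) ^ q ≤ w i * ((w i)⁻¹ * |x i|) ^ q := by gcongr; exact hw i
      _ ≤ C := hterm
  have hC : 0 ≤ c⁻¹ * C := (Real.rpow_nonneg (by positivity) _).trans hpow
  exact (Real.le_rpow_inv_iff_of_pos (by positivity) hC hq).2 hpow

lemma tsum_rpow_one_sub_mul_rpow_le {q₁ q₂ M : ℝ} (hw : ∀ i, 0 < w i) (hq₁ : 0 < q₁)
    (hq : q₁ ≤ q₂) (hM : ∀ i, (w i)⁻¹ * |x i| ≤ M)
    (hx : Summable fun i => w i ^ (1 - q₁) * |x i| ^ q₁) :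
    ∑' i, w i ^ (1 - q₂) * |x i| ^ q₂ ≤ (∑' i, w i ^ (1 - q₁) * |x i| ^ q₁) * M ^ (q₂ - q₁) := by
  have hle i := rpow_one_sub_mul_rpow_le (hw i) (abs_nonneg (x i)) hq₁ hq (hM i)
  have hnonneg i : 0 ≤ w i ^ (1 - q₂) * |x i| ^ q₂ := by have := hw i; positivity
  rw [← tsum_mul_right]
  exact (Summable.of_nonneg_of_le hnonneg hle (hx.mul_right _)).tsum_le_tsum hle (hx.mul_right _)

theorem weightedLpNorm_le_interpolation {q₁ q₂ : ℝ} (hw : ∀ i, 0 < w i) (hq₁ : 0 < q₁)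
    (hq : q₁ ≤ q₂) (hbdd : BddAbove (range fun i => (w i)⁻¹ * |x i|))
    (hx : Summable fun i => w i ^ (1 - q₁) * |x i| ^ q₁) :
    weightedLpNorm w x q₂ ≤
      weightedLpNorm w x q₁ ^ (q₁ / q₂) * weightedSupNorm w x ^ (1 - q₁ / q₂) := by
  have hq₂ : 0 < q₂ := hq₁.trans_le hq
  set M := weightedSupNorm w x
  have hM0 : 0 ≤ M := Real.iSup_nonneg fun i => by have := hw i; positivity
  have hS₁ : 0 ≤ ∑' i, w i ^ (1 - q₁) * |x i| ^ q₁ :=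
    tsum_nonneg fun i => by have := hw i; positivity
  have hS₂ : 0 ≤ ∑' i, w i ^ (1 - q₂) * |x i| ^ q₂ :=
    tsum_nonneg fun i => by have := hw i; positivity
  have hsum : _ ≤ _ * M ^ (q₂ - q₁) :=
    tsum_rpow_one_sub_mul_rpow_le hw hq₁ hq (fun i => le_ciSup hbdd i) hx
  calc weightedLpNorm w x q₂
      ≤ ((∑' i, w i ^ (1 - q₁) * |x i| ^ q₁) * M ^ (q₂ - q₁)) ^ (1 / q₂) := by
        unfold weightedLpNorm; gcongr
    _ = weightedLpNorm w x q₁ ^ (q₁ / q₂) * M ^ (1 - q₁ / q₂) := by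
        rw [Real.mul_rpow hS₁ (by positivity), weightedLpNorm, ← Real.rpow_mul hS₁,
          ← Real.rpow_mul hM0]
        congr 2 <;> field_simp

end Weighted

theorem stmt7_general (w : ℕ → ℝ) (hw : ∀ n, 0 < w n) (hmono : Monotone w)
    (p : ℝ) (hp : 1 < p) (r s : ℝ) (hr : 0 ≤ r) (hrs : r < s)
    (x : ℕ → ℝ)
    (hx : Summable fun n =>
      w n ^ (1 - p / (1 + s * (p - 1))) * |x n| ^ (p / (1 + s * (p - 1)))) :
    (∑' n, w n ^ (1 - p / (1 + r * (p - 1))) * |x n| ^ (p / (1 + r * (p - 1)))) ^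
        ((1 + r * (p - 1)) / p) ≤
      ((∑' n, w n ^ (1 - p / (1 + s * (p - 1))) * |x n| ^ (p / (1 + s * (p - 1)))) ^
          ((1 + s * (p - 1)) / p)) ^ ((1 / (p - 1) + r) / (1 / (p - 1) + s)) *
        (⨆ n, (w n)⁻¹ * |x n|) ^ ((s - r) / (1 / (p - 1) + s)) := by
  have hp₁ : 0 < p - 1 := by linarith
  have hAr : 0 < 1 + r * (p - 1) := by positivity
  have hAs : 1 + r * (p - 1) < 1 + s * (p - 1) := by gcongr
  have hq₁ : 0 < p / (1 + s * (p - 1)) := div_pos (by linarith) (hAr.trans hAs)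
  have hq : p / (1 + s * (p - 1)) ≤ p / (1 + r * (p - 1)) := by gcongr
  have hbdd := bddAbove_inv_mul_abs_of_summable (hw 0) (fun n => hmono n.zero_le) hq₁ hx
  have key := weightedLpNorm_le_interpolation hw hq₁ hq hbdd hx
  have hratio : p / (1 + s * (p - 1)) / (p / (1 + r * (p - 1))) =
      (1 / (p - 1) + r) / (1 / (p - 1) + s) := by
    field_simp
  have hcompl : 1 - (1 / (p - 1) + r) / (1 / (p - 1) + s) = (s - r) / (1 / (p - 1) + s) := by
    have : 0 < 1 / (p - 1) + s := by have := hr.trans_lt hrs; positivity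
    rw [one_sub_div this.ne', add_sub_add_left_eq_sub]
  rwa [weightedLpNorm, weightedLpNorm, one_div_div, one_div_div, hratio, hcompl] at key

/-- For a nondecreasing weight `w`, `1 < p < ∞`, `a := 1/(p−1)`,
`p_s := p/(1 + s(p−1))`, and `0 ≤ r < s ≤ 1`, every `x ∈ ℓ^{p_s}(w)` satisfies
`‖x‖_{ℓ^{p_r}(w)} ≤ ‖x‖_{ℓ^{p_s}(w)}^{(a+r)/(a+s)} ‖x‖_{ℓ^∞(w)}^{(s−r)/(a+s)}`.
Note `1/p_s = (1+s(p−1))/p`. -/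
theorem stmt7 (w : ℕ → ℝ) (hw : ∀ n, 0 < w n) (hmono : Monotone w)
    (p : ℝ) (hp : 1 < p) (r s : ℝ) (hr : 0 ≤ r) (hrs : r < s) (hs : s ≤ 1)
    (x : ℕ → ℝ)
    (hx : Summable fun n =>
      w n ^ (1 - p / (1 + s * (p - 1))) * |x n| ^ (p / (1 + s * (p - 1)))) :
    (∑' n, w n ^ (1 - p / (1 + r * (p - 1))) * |x n| ^ (p / (1 + r * (p - 1)))) ^
        ((1 + r * (p - 1)) / p) ≤
      ((∑' n, w n ^ (1 - p / (1 + s * (p - 1))) * |x n| ^ (p / (1 + s * (p - 1)))) ^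
          ((1 + s * (p - 1)) / p)) ^ ((1 / (p - 1) + r) / (1 / (p - 1) + s)) *
        (⨆ n, (w n)⁻¹ * |x n|) ^ ((s - r) / (1 / (p - 1) + s)) :=
  stmt7_general w hw hmono p hp r s hr hrs x hx
end

section
/- Let w : ℕ → (0,∞) be nondecreasing and f : [0,∞) → [0,1] be decreasing with f(0)=1 satisfying the growth condition ∑_n w(n) f(τ w(n)) ≤ C_w τ⁻¹ for all τ ∈ (0, τ₀]. Let 1 < p < ∞, a := 1/(p−1), s ∈ (0,1), p_s := p/(1+s(p−1)), and define (P_t x)(n) := f(t^{a+1} w(n)) x(n). Then for all 0 < t ≤ τ₀^{1/(a+1)} and x ∈ ℓ^{p_s}(w): ‖P_t x‖_{ℓ¹} ≤ C_w^{(1−s)/(a+1)} t^{s−1} ‖x‖_{ℓ^{p_s}(w)}. -/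
/-!
Write `τ = t^{a+1}` and `g(n) = f(τ w(n))`. Splitting `g x = (w^{(1-p_s)/p_s} |x|) · (w^{1/q} g)`
with `q` the conjugate exponent of `p_s`, Hölder's inequality bounds `‖g x‖_{ℓ¹}` by
`‖x‖_{ℓ^{p_s}(w)} (∑ w g^q)^{1/q}`. Since `0 ≤ g ≤ 1` and `q ≥ 1`, `∑ w g^q ≤ ∑ w g ≤ C_w τ⁻¹`,
and `1/q = 1 - 1/p_s = (1-s)/(a+1)` turns `(C_w τ⁻¹)^{1/q}` into `C_w^{(1-s)/(a+1)} t^{s-1}`.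
-/

open Real

section WeightedHolder

variable {ι : Type*} {w g x : ι → ℝ} {p q : ℝ}

theorem tsum_abs_mul_le_weighted_Lp_mul_Lq (hpq : p.HolderConjugate q) (hw : ∀ i, 0 < w i)
    (hg : ∀ i, 0 ≤ g i) (hx : Summable fun i => w i ^ (1 - p) * |x i| ^ p)
    (hwg : Summable fun i => w i * g i ^ q) :
    ∑' i, |g i * x i| ≤
      (∑' i, w i ^ (1 - p) * |x i| ^ p) ^ (1 / p) * (∑' i, w i * g i ^ q) ^ (1 / q) := by
  set F : ι → ℝ := fun i => w i ^ (-q⁻¹) * |x i|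
  set G : ι → ℝ := fun i => w i ^ q⁻¹ * g i
  have hF : ∀ i, F i ^ p = w i ^ (1 - p) * |x i| ^ p := fun i => by
    rw [mul_rpow (rpow_nonneg (hw i).le _) (abs_nonneg _), ← rpow_mul (hw i).le, neg_mul,
      inv_mul_eq_div, hpq.div_conj_eq_sub_one, neg_sub]
  have hG : ∀ i, G i ^ q = w i * g i ^ q := fun i => by
    rw [mul_rpow (rpow_nonneg (hw i).le _) (hg i), ← rpow_mul (hw i).le,
      inv_mul_cancel₀ hpq.symm.ne_zero, rpow_one]
  have hFG : ∀ i, |g i * x i| = F i * G i := fun i => by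
    rw [abs_mul, abs_of_nonneg (hg i), mul_mul_mul_comm, ← rpow_add (hw i), neg_add_cancel,
      rpow_zero, one_mul, mul_comm]
  calc ∑' i, |g i * x i| = ∑' i, F i * G i := tsum_congr hFG
    _ ≤ (∑' i, F i ^ p) ^ (1 / p) * (∑' i, G i ^ q) ^ (1 / q) :=
        inner_le_Lp_mul_Lq_tsum_of_nonneg hpq
          (fun i => mul_nonneg (rpow_nonneg (hw i).le _) (abs_nonneg (x i)))
          (fun i => mul_nonneg (rpow_nonneg (hw i).le _) (hg i))
          (by simpa only [hF] using hx) (by simpa only [hG] using hwg)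
    _ = _ := by simp only [hF, hG]

theorem tsum_abs_mul_le_of_tsum_weight_mul_le {B : ℝ} (hpq : p.HolderConjugate q)
    (hw : ∀ i, 0 < w i) (hg₀ : ∀ i, 0 ≤ g i) (hg₁ : ∀ i, g i ≤ 1)
    (hx : Summable fun i => w i ^ (1 - p) * |x i| ^ p) (hwg : Summable fun i => w i * g i)
    (hB : ∑' i, w i * g i ≤ B) :
    ∑' i, |g i * x i| ≤ B ^ (1 / q) * (∑' i, w i ^ (1 - p) * |x i| ^ p) ^ (1 / p) := by
  have hpow : ∀ i, w i * g i ^ q ≤ w i * g i := fun i =>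
    mul_le_mul_of_nonneg_left (rpow_le_self_of_le_one (hg₀ i) (hg₁ i) hpq.symm.lt.le) (hw i).le
  have hpow₀ : ∀ i, 0 ≤ w i * g i ^ q := fun i => mul_nonneg (hw i).le (rpow_nonneg (hg₀ i) q)
  have hwgq : Summable fun i => w i * g i ^ q := hwg.of_nonneg_of_le hpow₀ hpow
  have hmoment : ∑' i, w i * g i ^ q ≤ B := (hwgq.tsum_le_tsum hpow hwg).trans hB
  calc ∑' i, |g i * x i|
      ≤ (∑' i, w i ^ (1 - p) * |x i| ^ p) ^ (1 / p) * (∑' i, w i * g i ^ q) ^ (1 / q) :=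
        tsum_abs_mul_le_weighted_Lp_mul_Lq hpq hw hg₀ hx hwgq
    _ ≤ (∑' i, w i ^ (1 - p) * |x i| ^ p) ^ (1 / p) * B ^ (1 / q) :=
        mul_le_mul_of_nonneg_left
          (rpow_le_rpow (tsum_nonneg hpow₀) hmoment hpq.symm.one_div_nonneg)
          (rpow_nonneg (tsum_nonneg fun i => by have := hw i; positivity) _)
    _ = _ := mul_comm _ _

end WeightedHolder

theorem stmt9_general (w : ℕ → ℝ) (hw : ∀ n, 0 < w n)
    (f : ℝ → ℝ) (hrange : ∀ τ ∈ Set.Ici (0 : ℝ), f τ ∈ Set.Icc (0 : ℝ) 1)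
    (τ₀ C_w : ℝ) (hτ₀ : 0 < τ₀) (hCw : 0 < C_w)
    (hgrowth : ∀ τ : ℝ, 0 < τ → τ ≤ τ₀ →
      Summable (fun n => w n * f (τ * w n)) ∧ ∑' n, w n * f (τ * w n) ≤ C_w * τ⁻¹)
    (p : ℝ) (hp : 1 < p) (s : ℝ) (hs : s ∈ Set.Ioo (0 : ℝ) 1)
    (t : ℝ) (ht : 0 < t) (ht0 : t ≤ τ₀ ^ (1 / (1 / (p - 1) + 1)))
    (x : ℕ → ℝ)
    (hx : Summable fun n =>
      w n ^ (1 - p / (1 + s * (p - 1))) * |x n| ^ (p / (1 + s * (p - 1)))) :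
    ∑' n, |f (t ^ (1 / (p - 1) + 1) * w n) * x n| ≤
      C_w ^ ((1 - s) / (1 / (p - 1) + 1)) * t ^ (s - 1) *
        (∑' n, w n ^ (1 - p / (1 + s * (p - 1))) * |x n| ^ (p / (1 + s * (p - 1)))) ^
          ((1 + s * (p - 1)) / p) := by
  obtain ⟨hs₀, hs₁⟩ := hs
  have hp₁ : 0 < p - 1 := sub_pos.2 hp
  set a₁ := 1 / (p - 1) + 1 with ha₁
  have ha₁_pos : 0 < a₁ := by positivity
  have hps : 1 < p / (1 + s * (p - 1)) := by
    rw [one_lt_div (by positivity)]; nlinarith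
  have hconj := HolderConjugate.conjExponent hps
  have hτ : t ^ a₁ ≤ τ₀ := by
    rwa [one_div, le_rpow_inv_iff_of_pos ht.le hτ₀.le ha₁_pos] at ht0
  obtain ⟨hsum, hle⟩ := hgrowth (t ^ a₁) (rpow_pos_of_pos ht a₁) hτ
  have hf := fun n => hrange (t ^ a₁ * w n) (mul_nonneg (rpow_nonneg ht.le a₁) (hw n).le)
  refine (tsum_abs_mul_le_of_tsum_weight_mul_le hconj hw (fun n => (hf n).1) (fun n => (hf n).2)
    hx hsum hle).trans_eq ?_
  have hq : 1 / conjExponent (p / (1 + s * (p - 1))) = (1 - s) / a₁ := by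
    rw [one_div, ← hconj.one_sub_inv, ha₁]
    field_simp
    ring
  rw [hq, mul_rpow hCw.le (inv_nonneg.2 (rpow_nonneg ht.le a₁)), ← rpow_neg ht.le,
    ← rpow_mul ht.le, one_div_div, neg_mul, mul_div_cancel₀ _ ha₁_pos.ne', neg_sub]

/-- weighted `ℓ¹`-bound for the smoothing operators
`(P_t x)(n) = f(t^{a+1} w(n)) x(n)`: for `0 < t ≤ τ₀^{1/(a+1)}` and `x ∈ ℓ^{p_s}(w)`,
`‖P_t x‖_{ℓ¹} ≤ C_w^{(1−s)/(a+1)} t^{s−1} ‖x‖_{ℓ^{p_s}(w)}`, where `a = 1/(p−1)`,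
`p_s = p/(1+s(p−1))`, given the growth condition `∑_n w(n) f(τ w(n)) ≤ C_w τ⁻¹` on `(0,τ₀]`. -/
theorem stmt9 (w : ℕ → ℝ) (hw : ∀ n, 0 < w n) (hmono : Monotone w)
    (f : ℝ → ℝ) (hrange : ∀ τ ∈ Set.Ici (0 : ℝ), f τ ∈ Set.Icc (0 : ℝ) 1)
    (hanti : AntitoneOn f (Set.Ici 0)) (hf0 : f 0 = 1)
    (τ₀ C_w : ℝ) (hτ₀ : 0 < τ₀) (hCw : 0 < C_w)
    (hgrowth : ∀ τ : ℝ, 0 < τ → τ ≤ τ₀ →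
      Summable (fun n => w n * f (τ * w n)) ∧ ∑' n, w n * f (τ * w n) ≤ C_w * τ⁻¹)
    (p : ℝ) (hp : 1 < p) (s : ℝ) (hs : s ∈ Set.Ioo (0 : ℝ) 1)
    (t : ℝ) (ht : 0 < t) (ht0 : t ≤ τ₀ ^ (1 / (1 / (p - 1) + 1)))
    (x : ℕ → ℝ)
    (hx : Summable fun n =>
      w n ^ (1 - p / (1 + s * (p - 1))) * |x n| ^ (p / (1 + s * (p - 1)))) :
    ∑' n, |f (t ^ (1 / (p - 1) + 1) * w n) * x n| ≤
      C_w ^ ((1 - s) / (1 / (p - 1) + 1)) * t ^ (s - 1) *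
        (∑' n, w n ^ (1 - p / (1 + s * (p - 1))) * |x n| ^ (p / (1 + s * (p - 1)))) ^
          ((1 + s * (p - 1)) / p) :=
  stmt9_general w hw f hrange τ₀ C_w hτ₀ hCw hgrowth p hp s hs t ht ht0 x hx
end

section
/- Under the same hypotheses, for each s ∈ (0,1) there is a constant C*(s) > 0 such that the operators (P_t x)(n) := f(t^{a+1} w(n)) x(n) satisfy ‖(id − P_t)x‖_{ℓ^∞(w)} ≤ C*(s) t^{a+s} ‖x‖_{ℓ^{p_s}(w)} for all t > 0 and x ∈ ℓ^{p_s}(w). -/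
/-!
Write `q = p_s`. Since `(a + s) q = a + 1`, the multiplier `1 - f(t^{a+1} w(n))` equals
`1 - f(τ^q)` with `τ = t^{a+s} w(n)^{1/q}`. As `q ≥ 1` and `f` is `C¹` with `f(0) = 1`,
`1 - f(τ^q) ≤ C τ`: by the mean value theorem for `τ ≤ 1`, and by `f ≥ 0` for `τ > 1`.
Hence `w(n)⁻¹ |x(n) - f(t^{a+1} w(n)) x(n)| ≤ C t^{a+s} w(n)^{1/q - 1} |x(n)|`, and the last
factor `w(n)^{1/q - 1} |x(n)|` is the `q`-th root of a single term of `‖x‖_{ℓ^q(w)}^q`.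
-/

open Set

theorem ContDiffOn.exists_abs_sub_le_mul_Icc {f : ℝ → ℝ} {a b : ℝ} (hab : a < b)
    (hf : ContDiffOn ℝ 1 f (Icc a b)) :
    ∃ M, ∀ x ∈ Icc a b, ∀ y ∈ Icc a b, |f y - f x| ≤ M * |y - x| := by
  obtain ⟨M, hM⟩ := isCompact_Icc.exists_bound_of_continuousOn
    (hf.continuousOn_derivWithin (uniqueDiffOn_Icc hab) le_rfl)
  exact ⟨M, fun x hx y hy => (convex_Icc a b).norm_image_sub_le_of_norm_derivWithin_le
    (hf.differentiableOn one_ne_zero) hM hx hy⟩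

theorem exists_one_sub_comp_rpow_le_mul {f : ℝ → ℝ} (hf : ContDiffOn ℝ 1 f (Ici 0))
    (hpos : ∀ τ ∈ Ici (0 : ℝ), 0 ≤ f τ) (hf0 : f 0 = 1) {q : ℝ} (hq : 1 ≤ q) :
    ∃ C > 0, ∀ τ, 0 ≤ τ → 1 - f (τ ^ q) ≤ C * τ := by
  obtain ⟨M, hM⟩ := (hf.mono Icc_subset_Ici_self).exists_abs_sub_le_mul_Icc zero_lt_one
  refine ⟨max M 0 + 1, by positivity, fun τ hτ => ?_⟩
  have hτq : 0 ≤ τ ^ q := Real.rpow_nonneg hτ q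
  rcases le_or_gt τ 1 with hτ1 | hτ1
  · have hτqτ : τ ^ q ≤ τ := Real.rpow_le_self_of_le_one hτ hτ1 hq
    have hmvt := hM 0 (left_mem_Icc.2 zero_le_one) (τ ^ q)
      ⟨hτq, hτqτ.trans hτ1⟩
    rw [hf0, sub_zero, abs_of_nonneg hτq] at hmvt
    calc 1 - f (τ ^ q) ≤ |f (τ ^ q) - 1| := by rw [abs_sub_comm]; exact le_abs_self _
      _ ≤ M * τ ^ q := hmvt
      _ ≤ max M 0 * τ := mul_le_mul (le_max_left _ _) hτqτ hτq (le_max_right _ _)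
      _ ≤ (max M 0 + 1) * τ := by nlinarith
  · nlinarith [hpos _ hτq, le_max_right M 0]

theorem rpow_inv_sub_one_mul_abs_le_tsum_rpow {w x : ℕ → ℝ} (hw : ∀ n, 0 ≤ w n) {q : ℝ}
    (hq : 0 < q) (hx : Summable fun n => w n ^ (1 - q) * |x n| ^ q) (n : ℕ) :
    w n ^ (q⁻¹ - 1) * |x n| ≤ (∑' m, w m ^ (1 - q) * |x m| ^ q) ^ q⁻¹ := by
  have hterm_nonneg : ∀ m, 0 ≤ w m ^ (1 - q) * |x m| ^ q := fun m =>
    mul_nonneg (Real.rpow_nonneg (hw m) _) (Real.rpow_nonneg (abs_nonneg _) _)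
  have hroot := Real.rpow_le_rpow (hterm_nonneg n)
    (hx.le_tsum n fun m _ => hterm_nonneg m) (inv_nonneg.2 hq.le)
  rwa [Real.mul_rpow (Real.rpow_nonneg (hw n) _) (Real.rpow_nonneg (abs_nonneg _) _),
    ← Real.rpow_mul (hw n), ← Real.rpow_mul (abs_nonneg _), mul_inv_cancel₀ hq.ne',
    Real.rpow_one, show (1 - q) * q⁻¹ = q⁻¹ - 1 by field_simp] at hroot

theorem one_le_div_one_add_mul_sub_one {p s : ℝ} (hp : 1 < p) (hs : s ∈ Ioo (0 : ℝ) 1) :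
    1 ≤ p / (1 + s * (p - 1)) := by
  rw [one_le_div (by nlinarith [hs.1])]
  nlinarith [hs.2]

theorem add_mul_div_one_add_mul_sub_one {p s : ℝ} (hp : 1 < p) (hs : 0 ≤ s) :
    (1 / (p - 1) + s) * (p / (1 + s * (p - 1))) = 1 / (p - 1) + 1 := by
  have hp1 : p - 1 ≠ 0 := by linarith
  have hd : 1 + s * (p - 1) ≠ 0 := by nlinarith
  rw [div_add' _ _ _ hp1, div_add_one hp1, div_mul_div_comm,
    div_eq_div_iff (mul_ne_zero hp1 hd) hp1]
  ring

theorem stmt10_general (w : ℕ → ℝ) (hw : ∀ n, 0 < w n)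
    (f : ℝ → ℝ) (hf : ContDiffOn ℝ 1 f (Set.Ici 0))
    (hpos : ∀ τ ∈ Set.Ici (0 : ℝ), 0 ≤ f τ) (hanti : AntitoneOn f (Set.Ici 0))
    (hf0 : f 0 = 1)
    (p : ℝ) (hp : 1 < p) (s : ℝ) (hs : s ∈ Set.Ioo (0 : ℝ) 1) :
    ∃ C : ℝ, 0 < C ∧ ∀ t : ℝ, 0 < t → ∀ x : ℕ → ℝ,
      (Summable fun n =>
        w n ^ (1 - p / (1 + s * (p - 1))) * |x n| ^ (p / (1 + s * (p - 1)))) →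
      ⨆ n, (w n)⁻¹ * |x n - f (t ^ (1 / (p - 1) + 1) * w n) * x n| ≤
        C * t ^ (1 / (p - 1) + s) *
          (∑' n, w n ^ (1 - p / (1 + s * (p - 1))) * |x n| ^ (p / (1 + s * (p - 1)))) ^
            ((1 + s * (p - 1)) / p) := by
  set q := p / (1 + s * (p - 1))
  have hq : 1 ≤ q := one_le_div_one_add_mul_sub_one hp hs
  obtain ⟨C, hC, hCf⟩ := exists_one_sub_comp_rpow_le_mul hf hpos hf0 hq
  refine ⟨C, hC, fun t ht x hx => ciSup_le fun n => ?_⟩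
  rw [show (1 + s * (p - 1)) / p = q⁻¹ from (inv_div _ _).symm]
  have hw0 := (hw n).le
  have hτq : (t ^ (1 / (p - 1) + s) * w n ^ q⁻¹) ^ q = t ^ (1 / (p - 1) + 1) * w n := by
    rw [Real.mul_rpow (by positivity) (by positivity), ← Real.rpow_mul ht.le,
      ← Real.rpow_mul hw0, inv_mul_cancel₀ (by positivity), Real.rpow_one,
      add_mul_div_one_add_mul_sub_one hp hs.1.le]
  set T := t ^ (1 / (p - 1) + 1) * w n
  have hT : 0 ≤ T := by positivity
  have hfT : f T ≤ 1 := hf0 ▸ hanti self_mem_Ici hT hT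
  calc (w n)⁻¹ * |x n - f T * x n| = (1 - f T) * ((w n)⁻¹ * |x n|) := by
        rw [← one_sub_mul, abs_mul, abs_of_nonneg (sub_nonneg.2 hfT)]; ring
    _ ≤ C * (t ^ (1 / (p - 1) + s) * w n ^ q⁻¹) * ((w n)⁻¹ * |x n|) := by
        gcongr
        rw [← hτq]
        exact hCf _ (by positivity)
    _ = C * t ^ (1 / (p - 1) + s) * (w n ^ (q⁻¹ - 1) * |x n|) := by
        rw [Real.rpow_sub_one (hw n).ne']; ring
    _ ≤ C * t ^ (1 / (p - 1) + s) * (∑' m, w m ^ (1 - q) * |x m| ^ q) ^ q⁻¹ := by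
        gcongr
        exact rpow_inv_sub_one_mul_abs_le_tsum_rpow (fun m => (hw m).le) (by positivity) hx n

/-- For each `s ∈ (0,1)` there is `C*(s) > 0` such that the operators
`(P_t x)(n) := f(t^{a+1} w(n)) x(n)` satisfy
`‖(id − P_t)x‖_{ℓ^∞(w)} ≤ C*(s) t^{a+s} ‖x‖_{ℓ^{p_s}(w)}` for all `t > 0` and
`x ∈ ℓ^{p_s}(w)`, where `a = 1/(p−1)` and `p_s = p/(1+s(p−1))`. -/
theorem stmt10 (w : ℕ → ℝ) (hw : ∀ n, 0 < w n) (hmono : Monotone w)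
    (f : ℝ → ℝ) (hf : ContDiffOn ℝ 1 f (Set.Ici 0))
    (hpos : ∀ τ ∈ Set.Ici (0 : ℝ), 0 ≤ f τ) (hanti : AntitoneOn f (Set.Ici 0))
    (hf0 : f 0 = 1)
    (p : ℝ) (hp : 1 < p) (s : ℝ) (hs : s ∈ Set.Ioo (0 : ℝ) 1) :
    ∃ C : ℝ, 0 < C ∧ ∀ t : ℝ, 0 < t → ∀ x : ℕ → ℝ,
      (Summable fun n =>
        w n ^ (1 - p / (1 + s * (p - 1))) * |x n| ^ (p / (1 + s * (p - 1)))) →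
      ⨆ n, (w n)⁻¹ * |x n - f (t ^ (1 / (p - 1) + 1) * w n) * x n| ≤
        C * t ^ (1 / (p - 1) + s) *
          (∑' n, w n ^ (1 - p / (1 + s * (p - 1))) * |x n| ^ (p / (1 + s * (p - 1)))) ^
            ((1 + s * (p - 1)) / p) :=
  stmt10_general w hw f hf hpos hanti hf0 p hp s hs
end
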